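/- Let n ≥ 3 be an integer, k > 3/2 a real number, and A = (a_{ij}) a real symmetric n×n matrix with trace H. If equality holds in the inequality k·|A|² − a_{11}a_{nn} − Σ_{i=1}^{n} a_{1i}² − Σ_{i=2}^{n} a_{in}² + H·(a_{11} + a_{nn}) = ((2k² + k − n + 2)/(2nk − 3n + 6))·H², then A is diagonal with a_{11} = a_{nn} = ((2k + 2 − n)/(2nk − 3n + 6))·H and a_{ii} = ((2k − 1)/(2nk − 3n + 6))·H for all 2 ≤ i ≤ n−1. -/
import Mathlib

open Finset

set_option maxHeartbeats 1000000 in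
lemma aux_rigidity (n : ℕ) (hn : 3 ≤ n) (k : ℝ) (hk : 3 / 2 < k)
    (A : Matrix (Fin n) (Fin n) ℝ) (hA : A.IsSymm)
    (i0 il : Fin n) (hne : i0 ≠ il)
    (heq : k * (∑ i, ∑ j, (A i j) ^ 2)
      - A i0 i0 * A il il
      - (∑ i, (A i0 i) ^ 2)
      - (∑ i ∈ Finset.univ.erase i0, (A i il) ^ 2)
      + (∑ i, A i i) * (A i0 i0 + A il il)
      = ((2 * k ^ 2 + k - n + 2) / (2 * n * k - 3 * n + 6)) * (∑ i, A i i) ^ 2) :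
    (∀ i j : Fin n, i ≠ j → A i j = 0) ∧
    A i0 i0 = ((2 * k + 2 - n) / (2 * n * k - 3 * n + 6)) * (∑ i, A i i) ∧
    A il il = ((2 * k + 2 - n) / (2 * n * k - 3 * n + 6)) * (∑ i, A i i) ∧
    (∀ i : Fin n, i ≠ i0 → i ≠ il →
      A i i = ((2 * k - 1) / (2 * n * k - 3 * n + 6)) * (∑ i, A i i)) := by
  have hN : (3:ℝ) ≤ (n:ℝ) := by exact_mod_cast hn
  set D : ℝ := 2 * n * k - 3 * n + 6 with hDdef
  have hD : 0 < D := by nlinarith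
  set m : ℝ := (n:ℝ) - 2 with hmdef
  have hm : 0 < m := by simp only [hmdef]; linarith
  set a := A i0 i0 with hadef
  set b := A il il with hbdef
  have hil : il ∈ Finset.univ.erase i0 := mem_erase.mpr ⟨hne.symm, mem_univ _⟩
  set M : Finset (Fin n) := (Finset.univ.erase i0).erase il with hM
  have hcard : (M.card : ℝ) = m := by
    have h1 : M.card = n - 2 := by
      rw [hM, card_erase_of_mem hil, card_erase_of_mem (mem_univ _), card_univ,
        Fintype.card_fin]
      omega
    rw [h1, Nat.cast_sub (by omega)]
    simp [hmdef]
  set S := ∑ i ∈ M, A i i with hSdef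
  set H := ∑ i, A i i with hHdef
  have hH : H = a + b + S := by
    rw [hHdef, ← Finset.sum_erase_add Finset.univ _ (mem_univ i0),
      ← Finset.sum_erase_add _ _ hil, ← hM, ← hSdef]
    ring
  set Q := ∑ i ∈ M, (A i i) ^ 2 with hQdef
  have hQ : ∑ i, (A i i) ^ 2 = a ^ 2 + b ^ 2 + Q := by
    rw [← Finset.sum_erase_add Finset.univ _ (mem_univ i0),
      ← Finset.sum_erase_add _ _ hil, ← hM, ← hQdef]
    ring
  set f : Fin n → ℝ := fun i => ∑ j ∈ Finset.univ.erase i, (A i j) ^ 2 with hfdef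
  have hfnonneg : ∀ i, 0 ≤ f i := fun i => Finset.sum_nonneg fun j _ => sq_nonneg _
  set T := ∑ i, f i with hTdef
  have hT0 : 0 ≤ T := Finset.sum_nonneg fun i _ => hfnonneg i
  have hP : ∑ i, ∑ j, (A i j) ^ 2 = (∑ i, (A i i) ^ 2) + T := by
    rw [hTdef, ← Finset.sum_add_distrib]
    refine Finset.sum_congr rfl fun i _ => ?_
    rw [← Finset.sum_erase_add Finset.univ (fun j => (A i j) ^ 2) (mem_univ i), hfdef]
    ring
  have h0 : ∑ i, (A i0 i) ^ 2 = a ^ 2 + f i0 := by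
    rw [← Finset.sum_erase_add Finset.univ (fun i => (A i0 i) ^ 2) (mem_univ i0), hfdef]
    ring
  set Cl := ∑ i ∈ M, (A i il) ^ 2 with hCldef
  have hl : ∑ i ∈ Finset.univ.erase i0, (A i il) ^ 2 = b ^ 2 + Cl := by
    rw [← Finset.sum_erase_add (Finset.univ.erase i0) (fun i => (A i il) ^ 2) hil, ← hM,
      ← hCldef]
    ring
  have hClf : Cl ≤ f il := by
    calc Cl = ∑ i ∈ M, (A il i) ^ 2 :=
          Finset.sum_congr rfl fun i _ => by rw [hA.apply il i]
      _ ≤ f il := by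
          refine Finset.sum_le_sum_of_subset_of_nonneg ?_ fun j _ _ => sq_nonneg _
          intro x hx
          rw [hM] at hx
          simp only [Finset.mem_erase, Finset.mem_univ, and_true] at hx ⊢
          exact hx.1
  have hfT : f i0 + f il ≤ T := by
    have h := Finset.sum_le_sum_of_subset_of_nonneg
      (Finset.subset_univ ({i0, il} : Finset (Fin n))) (fun i _ _ => hfnonneg i)
    rwa [Finset.sum_pair hne] at h
  set P1 := ∑ i ∈ M, (m * A i i - S) ^ 2 with hP1def
  have hP1nn : 0 ≤ P1 := Finset.sum_nonneg fun i _ => sq_nonneg _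
  have hP1 : P1 = m ^ 2 * Q - m * S ^ 2 := by
    calc P1 = ∑ i ∈ M, (m ^ 2 * (A i i) ^ 2 - 2 * m * S * (A i i) + S ^ 2) :=
          Finset.sum_congr rfl fun i _ => by ring
      _ = (m ^ 2 * Q - 2 * m * S * S) + (M.card : ℝ) * S ^ 2 := by
          rw [Finset.sum_add_distrib, Finset.sum_sub_distrib, ← Finset.mul_sum,
            ← Finset.mul_sum, Finset.sum_const, nsmul_eq_mul, ← hQdef, ← hSdef]
      _ = m ^ 2 * Q - m * S ^ 2 := by rw [hcard]; ring
  set E := (2 * k - 1) * m * (a + b) / 2 - (2 * k - (n:ℝ) + 2) * S with hEdef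
  -- rewrite heq into scalar form
  rw [hP, hQ, h0, hl, hH] at heq
  have heq' : D * (k * (a ^ 2 + b ^ 2 + Q + T) - a * b - (a ^ 2 + f i0) - (b ^ 2 + Cl)
      + (a + b + S) * (a + b)) = (2 * k ^ 2 + k - (n:ℝ) + 2) * (a + b + S) ^ 2 := by
    rw [heq]
    field_simp
  -- master identity
  have key : 4 * D * (k * P1) + D * m ^ 2 * (2 * k - 1) * (a - b) ^ 2 + 4 * m * E ^ 2
      + 4 * D * m ^ 2 * (T - (f i0 + Cl)) + 4 * D * m ^ 2 * ((k - 1) * T) = 0 := by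
    rw [hP1, hEdef, hmdef, hDdef]
    rw [hDdef] at heq'
    linear_combination (4 * ((n:ℝ) - 2) ^ 2) * heq'
  have h1 : 0 ≤ 4 * D * (k * P1) :=
    mul_nonneg (by linarith) (mul_nonneg (by linarith) hP1nn)
  have h2 : 0 ≤ D * m ^ 2 * (2 * k - 1) * (a - b) ^ 2 :=
    mul_nonneg (mul_nonneg (mul_nonneg hD.le (sq_nonneg m)) (by linarith)) (sq_nonneg _)
  have h3 : 0 ≤ 4 * m * E ^ 2 := mul_nonneg (by linarith) (sq_nonneg E)
  have h4 : 0 ≤ 4 * D * m ^ 2 * (T - (f i0 + Cl)) := by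
    have : f i0 + Cl ≤ T := le_trans (by linarith [hClf]) hfT
    have hc : 0 ≤ 4 * D * m ^ 2 := mul_nonneg (by linarith) (sq_nonneg m)
    exact mul_nonneg hc (by linarith)
  have hk1 : 0 < k - 1 := by linarith
  have h5 : 0 ≤ 4 * D * m ^ 2 * ((k - 1) * T) :=
    mul_nonneg (mul_nonneg (by linarith) (sq_nonneg m)) (mul_nonneg hk1.le hT0)
  clear heq heq'
  have hcpos : 0 < 4 * D * m ^ 2 := mul_pos (by linarith) (pow_pos hm 2)
  have hTz : T = 0 := by
    have e5 : 4 * D * m ^ 2 * ((k - 1) * T) = 0 := by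
      linarith only [key, h1, h2, h3, h4, h5]
    rcases mul_eq_zero.mp e5 with h | h
    · exact absurd h hcpos.ne'
    · rcases mul_eq_zero.mp h with h' | h'
      · linarith
      · exact h'
  have hEz : E = 0 := by
    have e3 : 4 * m * E ^ 2 = 0 := by linarith only [key, h1, h2, h3, h4, h5]
    rcases mul_eq_zero.mp e3 with h | h
    · linarith
    · exact pow_eq_zero_iff two_ne_zero |>.mp h
  have hab : a = b := by
    have e2 : D * m ^ 2 * (2 * k - 1) * (a - b) ^ 2 = 0 := by
      linarith only [key, h1, h2, h3, h4, h5]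
    rcases mul_eq_zero.mp e2 with h | h
    · nlinarith [pow_pos hm 2]
    · have := pow_eq_zero_iff two_ne_zero |>.mp h
      linarith
  have hP1z : P1 = 0 := by
    have e1 : 4 * D * (k * P1) = 0 := by linarith only [key, h1, h2, h3, h4, h5]
    rcases mul_eq_zero.mp e1 with h | h
    · linarith
    · rcases mul_eq_zero.mp h with h' | h'
      · linarith
      · exact h'
  have hmid : ∀ i ∈ M, m * A i i = S := by
    intro i hi
    have h := (Finset.sum_eq_zero_iff_of_nonneg fun j (_ : j ∈ M) => sq_nonneg
      (m * A j j - S)).mp (by rw [← hP1def]; exact hP1z) i hi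
    have := pow_eq_zero_iff two_ne_zero |>.mp h
    linarith
  have hoff : ∀ i j : Fin n, i ≠ j → A i j = 0 := by
    intro i j hij
    have hfi : f i = 0 := by
      have := (Finset.sum_eq_zero_iff_of_nonneg fun i (_ : i ∈ Finset.univ) =>
        hfnonneg i).mp (by rw [← hTdef]; exact hTz) i (mem_univ i)
      exact this
    have hji : j ∈ Finset.univ.erase i := mem_erase.mpr ⟨hij.symm, mem_univ _⟩
    have := (Finset.sum_eq_zero_iff_of_nonneg fun j (_ : j ∈ Finset.univ.erase i) =>
      sq_nonneg (A i j)).mp (by rw [← hfdef] at *; exact hfi) j hji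
    exact pow_eq_zero_iff two_ne_zero |>.mp this
  rw [hEdef, hmdef] at hEz
  refine ⟨hoff, ?_, ?_, ?_⟩
  · -- a
    rw [div_mul_eq_mul_div, eq_div_iff hD.ne', hH, hDdef]
    linear_combination hEz + ((2 * k + 2 - (n:ℝ)) + (2 * k - 1) * ((n:ℝ) - 2) / 2) * hab
  · -- b
    rw [div_mul_eq_mul_div, eq_div_iff hD.ne', hH, hDdef]
    linear_combination hEz + ((2 * k + 2 - (n:ℝ)) + (2 * k - 1) * ((n:ℝ) - 2) / 2
      - (2 * ((n:ℝ)) * k - 3 * (n:ℝ) + 6)) * hab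
  · -- middle
    intro i hi0 hiℓ
    have hiM : i ∈ M := by
      rw [hM]
      exact mem_erase.mpr ⟨hiℓ, mem_erase.mpr ⟨hi0, mem_univ _⟩⟩
    have hmi := hmid i hiM
    rw [hmdef] at hmi
    rw [div_mul_eq_mul_div, eq_div_iff hD.ne', hH, hDdef]
    have hm' : ((n:ℝ) - 2) ≠ 0 := by rw [← hmdef]; exact hm.ne'
    -- A i i * D = (2k-1) * H ; from (n-2) * A i i = S and D*S = (2k-1)*(n-2)*H (= -2E)
    have hDS : (2 * (n:ℝ) * k - 3 * n + 6) * S = (2 * k - 1) * ((n:ℝ) - 2) * (a + b + S) := by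
      linear_combination (-2) * hEz
    have hgoal : ((n:ℝ) - 2) * (A i i * (2 * (n:ℝ) * k - 3 * n + 6))
        = ((n:ℝ) - 2) * ((2 * k - 1) * (a + b + S)) := by
      linear_combination (2 * (n:ℝ) * k - 3 * (n:ℝ) + 6) * hmi + hDS
    exact mul_left_cancel₀ hm' hgoal
/-- rigidity (equality case) of the matrix inequality for `k > 3/2`. -/
theorem matrix_ineq_rigidity (n : ℕ) (hn : 3 ≤ n) (k : ℝ) (hk : 3 / 2 < k)
    (A : Matrix (Fin n) (Fin n) ℝ) (hA : A.IsSymm)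
    (heq : k * (∑ i, ∑ j, (A i j) ^ 2)
      - A ⟨0, by omega⟩ ⟨0, by omega⟩ * A ⟨n - 1, by omega⟩ ⟨n - 1, by omega⟩
      - (∑ i, (A ⟨0, by omega⟩ i) ^ 2)
      - (∑ i ∈ Finset.univ.erase ⟨0, by omega⟩, (A i ⟨n - 1, by omega⟩) ^ 2)
      + (∑ i, A i i) * (A ⟨0, by omega⟩ ⟨0, by omega⟩ + A ⟨n - 1, by omega⟩ ⟨n - 1, by omega⟩)
      = ((2 * k ^ 2 + k - n + 2) / (2 * n * k - 3 * n + 6)) * (∑ i, A i i) ^ 2) :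
    (∀ i j : Fin n, i ≠ j → A i j = 0) ∧
    A ⟨0, by omega⟩ ⟨0, by omega⟩
      = ((2 * k + 2 - n) / (2 * n * k - 3 * n + 6)) * (∑ i, A i i) ∧
    A ⟨n - 1, by omega⟩ ⟨n - 1, by omega⟩
      = ((2 * k + 2 - n) / (2 * n * k - 3 * n + 6)) * (∑ i, A i i) ∧
    (∀ i : Fin n, i ≠ (⟨0, by omega⟩ : Fin n) → i ≠ (⟨n - 1, by omega⟩ : Fin n) →
      A i i = ((2 * k - 1) / (2 * n * k - 3 * n + 6)) * (∑ i, A i i)) := by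
  exact aux_rigidity n hn k hk A hA ⟨0, by omega⟩ ⟨n - 1, by omega⟩
    (by simp only [ne_eq, Fin.mk.injEq]; omega) heq
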